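/- arXiv:1602.03283 — 6 statements merged into one kernel-verified Lean document; each statement's English description precedes it below -/
import Mathlib

section
/- Let 0 < λ < 1, κ ∈ ℝ, P_x > 0, and G ∈ ℝ. Define, for n ≥ 1, η_n = λ(1−λ^n)/(1−λ^{n+1}) and ρ_n = (κ/P_x)(1−λ)/(1−λ^{n+1}), and for n ≥ 0 define c_n = λ^n(1−λ)/(1−λ^{n+1}) and d_n = (κ/P_x)(1−λ^n)/(1−λ^{n+1}). If a real sequence (a_n)_{n≥0} satisfies the recursion a_n = η_n a_{n−1} + ρ_n G for all n ≥ 1, then for every n ≥ 0 one has a_n = c_n a_0 + d_n G. -/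
/-! Multiplying the recursion by `1 - λ^(n+1)` turns it into the constant-coefficient affine
recursion `b n = λ b (n-1) + (1 - λ) (κ/Px) G` for `b n = (1 - λ^(n+1)) a n`, whose solution
`b n = λ^n b 0 + (1 - λ^n) (κ/Px) G` is the claim after dividing back. -/

theorem affine_recurrence_eq {R : Type*} [CommRing R] (r c : R) (b : ℕ → R)
    (h : ∀ n, b (n + 1) = r * b n + (1 - r) * c) (n : ℕ) :
    b n = r ^ n * b 0 + (1 - r ^ n) * c := by
  induction n with
  | zero => simp
  | succ n ih => rw [h, ih]; ring

theorem one_sub_pow_succ_ne_zero {x : ℝ} (hx0 : 0 < x) (hx1 : x < 1) (n : ℕ) :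
    1 - x ^ (n + 1) ≠ 0 :=
  (sub_pos.2 (pow_lt_one₀ hx0.le hx1 n.succ_ne_zero)).ne'

theorem stmt_0_general (lam κ Px G : ℝ) (hlam0 : 0 < lam) (hlam1 : lam < 1)
    (a : ℕ → ℝ)
    (hrec : ∀ n : ℕ, 1 ≤ n →
      a n = (lam * ((1 - lam ^ n) / (1 - lam ^ (n + 1)))) * a (n - 1)
            + ((κ / Px) * ((1 - lam) / (1 - lam ^ (n + 1)))) * G) :
    ∀ n : ℕ,
      a n = (lam ^ n * ((1 - lam) / (1 - lam ^ (n + 1)))) * a 0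
            + ((κ / Px) * ((1 - lam ^ n) / (1 - lam ^ (n + 1)))) * G := by
  have hD := one_sub_pow_succ_ne_zero hlam0 hlam1
  have hb : ∀ n, (1 - lam ^ (n + 1 + 1)) * a (n + 1)
      = lam * ((1 - lam ^ (n + 1)) * a n) + (1 - lam) * (κ / Px * G) := by
    intro n
    rw [hrec (n + 1) n.succ_pos, Nat.add_sub_cancel]
    field_simp [hD (n + 1)]
  intro n
  have hsol := affine_recurrence_eq lam (κ / Px * G) (fun m ↦ (1 - lam ^ (m + 1)) * a m) hb n
  field_simp [hD n]
  linear_combination hsol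

/-- Solved form of the mean-deviation recursion of l0-RLS (Theorem 1):
if `a n = η n * a (n-1) + ρ n * G` for `n ≥ 1`, with
`η n = λ(1-λ^n)/(1-λ^(n+1))` and `ρ n = (κ/Px)(1-λ)/(1-λ^(n+1))`, then
`a n = c n * a 0 + d n * G` where `c n = λ^n(1-λ)/(1-λ^(n+1))` and
`d n = (κ/Px)(1-λ^n)/(1-λ^(n+1))`. -/
theorem stmt_0 (lam κ Px G : ℝ) (hlam0 : 0 < lam) (hlam1 : lam < 1) (hPx : 0 < Px)
    (a : ℕ → ℝ)
    (hrec : ∀ n : ℕ, 1 ≤ n →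
      a n = (lam * ((1 - lam ^ n) / (1 - lam ^ (n + 1)))) * a (n - 1)
            + ((κ / Px) * ((1 - lam) / (1 - lam ^ (n + 1)))) * G) :
    ∀ n : ℕ,
      a n = (lam ^ n * ((1 - lam) / (1 - lam ^ (n + 1)))) * a 0
            + ((κ / Px) * ((1 - lam ^ n) / (1 - lam ^ (n + 1)))) * G :=
  stmt_0_general lam κ Px G hlam0 hlam1 a hrec
end

section
/- Let β₁ > β₂ > 0 and β₃ > 0, and for θ > 0 define f(θ) = β₁θ² − β₂θ√(β₃ + θ²). Then for every θ > 0, f(θ) ≥ (β₃/2)·(√(β₁² − β₂²) − β₁). -/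
/-!
Put `c = √(β₁² - β₂²)`, so that `(β₁ + c)(β₁ - c) = β₂²` with both factors nonnegative. Then
`β₂ θ √(β₃ + θ²)` is the geometric mean of `(β₁ + c) θ²` and `(β₁ - c)(β₃ + θ²)`, and bounding it by
their arithmetic mean gives `β₂ θ √(β₃ + θ²) ≤ β₁ θ² + (β₃ / 2)(β₁ - c)`.
-/

/-- Corollary 2 (lower bound): for `β₁ > β₂ > 0`, `β₃ > 0` and all `θ > 0`,
`β₁θ² - β₂θ√(β₃ + θ²) ≥ (β₃/2)(√(β₁² - β₂²) - β₁)`. -/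
theorem stmt_11 (β₁ β₂ β₃ : ℝ) (h12 : β₂ < β₁) (h2 : 0 < β₂) (h3 : 0 < β₃) :
    ∀ θ : ℝ, 0 < θ →
      β₁ * θ ^ 2 - β₂ * θ * Real.sqrt (β₃ + θ ^ 2)
        ≥ (β₃ / 2) * (Real.sqrt (β₁ ^ 2 - β₂ ^ 2) - β₁) := by
  intro θ _
  set c := Real.sqrt (β₁ ^ 2 - β₂ ^ 2)
  set s := Real.sqrt (β₃ + θ ^ 2)
  have hc : c ^ 2 = β₁ ^ 2 - β₂ ^ 2 := Real.sq_sqrt (by nlinarith)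
  have hs : s ^ 2 = β₃ + θ ^ 2 := Real.sq_sqrt (by positivity)
  have hc_nonneg : 0 ≤ c := Real.sqrt_nonneg _
  have hc_le : c ≤ β₁ :=
    (Real.sqrt_le_sqrt (by nlinarith)).trans_eq (Real.sqrt_sq (h2.trans h12).le)
  have amgm : 2 * (β₂ * θ * s) ≤ (β₁ + c) * θ ^ 2 + (β₁ - c) * s ^ 2 :=
    two_mul_le_add_of_sq_le_mul (mul_nonneg (by linarith) (sq_nonneg θ))
      (mul_nonneg (sub_nonneg.2 hc_le) (sq_nonneg s))
      (by linear_combination θ ^ 2 * s ^ 2 * hc)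
  rw [hs] at amgm
  linear_combination amgm / 2
end

section
/- Let β₁ > β₂ > 0 and β₃ > 0, and for θ > 0 define f(θ) = β₁θ² − β₂θ√(β₃ + θ²). Then at θ_opt = (√β₃ / 2)·( ((β₁+β₂)/(β₁−β₂))^{1/4} − ((β₁−β₂)/(β₁+β₂))^{1/4} ), one has θ_opt > 0 and f(θ_opt) = (β₃/2)·(√(β₁² − β₂²) − β₁). -/
/-!
Substitute `θ = (√β₃/2)(t - t⁻¹)` with `t > 1`. Then `β₃ + θ² = (β₃/4)(t + t⁻¹)²`, the square root
disappears and `f(θ) = (β₃/4)((β₁ - β₂)t² + (β₁ + β₂)t⁻² - 2β₁)`. For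
`t⁴ = (β₁ + β₂)/(β₁ - β₂)` both `(β₁ - β₂)t²` and `(β₁ + β₂)t⁻²` equal `√(β₁² - β₂²)`
(AM–GM is tight there, which is why this `t` is the minimizer).
-/

namespace Real

lemma sqrt_four_mul_sq_add_sq_sub_inv {c t : ℝ} (hc : 0 ≤ c) (ht : 0 < t) :
    √(4 * c ^ 2 + (c * (t - t⁻¹)) ^ 2) = c * (t + t⁻¹) := by
  have hsq : 4 * c ^ 2 + (c * (t - t⁻¹)) ^ 2 = (c * (t + t⁻¹)) ^ 2 := by
    field_simp
    ring
  rw [hsq, sqrt_sq (by positivity)]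

lemma sq_rpow_one_div_four {x : ℝ} (hx : 0 ≤ x) : (x ^ ((1 : ℝ) / 4)) ^ 2 = √x := by
  rw [← rpow_natCast, ← rpow_mul hx, sqrt_eq_rpow]
  norm_num

lemma mul_sqrt_div {a b : ℝ} (hb : 0 ≤ b) : b * √(a / b) = √(a * b) := by
  rcases hb.eq_or_lt with rfl | hb
  · simp
  rw [← sqrt_sq hb.le, ← sqrt_mul (sq_nonneg b), sqrt_sq hb.le]
  congr 1
  field_simp

end Real

open Real

lemma mul_sq_add_mul_inv_sq_of_rpow_one_div_four {a b t : ℝ} (ha : 0 < a) (hb : 0 < b)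
    (ht : t = (a / b) ^ ((1 : ℝ) / 4)) :
    b * t ^ 2 + a * t⁻¹ ^ 2 = 2 * √(a * b) := by
  have ht_inv : t⁻¹ = (b / a) ^ ((1 : ℝ) / 4) := by
    rw [ht, ← inv_rpow (by positivity), inv_div]
  rw [ht_inv, ht, sq_rpow_one_div_four (by positivity), sq_rpow_one_div_four (by positivity),
    mul_sqrt_div hb.le, mul_sqrt_div ha.le, mul_comm b a]
  ring

lemma mul_sq_sub_mul_mul_add_inv {β₁ β₂ c t : ℝ} (ht : t ≠ 0) :
    β₁ * (c * (t - t⁻¹)) ^ 2 - β₂ * (c * (t - t⁻¹)) * (c * (t + t⁻¹))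
      = c ^ 2 * ((β₁ - β₂) * t ^ 2 + (β₁ + β₂) * t⁻¹ ^ 2 - 2 * β₁) := by
  field_simp
  ring

/-- Corollary 2 (minimizer): at
`θopt = (√β₃/2)(((β₁+β₂)/(β₁-β₂))^(1/4) - ((β₁-β₂)/(β₁+β₂))^(1/4))`
one has `θopt > 0` and `f(θopt) = (β₃/2)(√(β₁² - β₂²) - β₁)` where
`f(θ) = β₁θ² - β₂θ√(β₃ + θ²)`. -/
theorem stmt_12 (β₁ β₂ β₃ : ℝ) (h12 : β₂ < β₁) (h2 : 0 < β₂) (h3 : 0 < β₃) :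
    let θopt : ℝ := (Real.sqrt β₃ / 2) *
        (((β₁ + β₂) / (β₁ - β₂)) ^ ((1 : ℝ) / 4) - ((β₁ - β₂) / (β₁ + β₂)) ^ ((1 : ℝ) / 4))
    0 < θopt ∧
      β₁ * θopt ^ 2 - β₂ * θopt * Real.sqrt (β₃ + θopt ^ 2)
        = (β₃ / 2) * (Real.sqrt (β₁ ^ 2 - β₂ ^ 2) - β₁) := by
  intro θopt
  set t := ((β₁ + β₂) / (β₁ - β₂)) ^ ((1 : ℝ) / 4) with ht
  set c := √β₃ / 2
  have hdiff : 0 < β₁ - β₂ := by linarith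
  have ht_one : 1 < t := one_lt_rpow (by rw [one_lt_div hdiff]; linarith) (by norm_num)
  have ht_pos : 0 < t := by linarith
  have hθ : θopt = c * (t - t⁻¹) := by
    rw [← inv_rpow (div_nonneg (by linarith) hdiff.le), inv_div]
  have hβ₃ : β₃ = 4 * c ^ 2 := by
    rw [div_pow, sq_sqrt h3.le]
    ring
  refine ⟨?_, ?_⟩
  · have ht_inv : t⁻¹ < 1 := inv_lt_one_of_one_lt₀ ht_one
    rw [hθ]
    exact mul_pos (by positivity) (by linarith)
  · rw [hθ, hβ₃, sqrt_four_mul_sq_add_sq_sub_inv (by positivity) ht_pos,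
      mul_sq_sub_mul_mul_add_inv ht_pos.ne',
      mul_sq_add_mul_inv_sq_of_rpow_one_div_four (by linarith) hdiff ht,
      show (β₁ + β₂) * (β₁ - β₂) = β₁ ^ 2 - β₂ ^ 2 by ring]
    ring
end

section
/- Let N, K be natural numbers with 1 ≤ N and K < N, let 0 < λ < 1, G > 0 and q > 0. For β > 0 define β₁(β) = G/(β²(1−λ)²) + ((N−K)/(1−λ²)²)·(4λ²/π + 1−λ²), and define the β-independent constants β₂ = (4λ(N−K)/(√(2π)(1−λ²)²))·√(2λ²/π + 1−λ²) and β₃ = q/(2λ²/(π(1−λ²)) + 1). Define D_min(β) = Nq/(1−λ²) + (β₃/2)·(√(β₁(β)² − β₂²) − β₁(β)) and D_RLS = Nq/(1−λ²). Then lim_{β→∞} D_min(β)/D_RLS = ( π(1−λ²) + 2(K/N)λ² ) / ( π(1−λ²) + 2λ² ). -/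
/-!
As `β → ∞` the attraction term `G / (β²(1-λ)²)` of `β₁` vanishes, so `β₁` tends to
`B = (N-K)/(1-λ²)² · (4λ²/π + 1 - λ²)`. The constants are tuned so that `B² - β₂²` is the perfect
square `((N-K)/(1-λ²))²`; hence `D_min` tends to `D_RLS + (β₃/2)((N-K)/(1-λ²) - B)` by continuity,
and the ratio is a rational function of `λ`, `K`, `N` which simplifies to the claimed value.
-/

open Filter Topology Real

lemma tendsto_div_sq_mul_atTop_nhds_zero (G a : ℝ) :
    Tendsto (fun β : ℝ => G / (β ^ 2 * a)) atTop (𝓝 0) := by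
  have h := (tendsto_inv_atTop_zero.comp (tendsto_pow_atTop two_ne_zero)).const_mul (G * a⁻¹)
  simpa [div_eq_mul_inv, mul_inv, mul_comm, mul_left_comm, mul_assoc] using h

lemma msd_beta_sq_sub_sq_eq (M lam : ℝ) (hlam : lam ^ 2 < 1) :
    (M / (1 - lam ^ 2) ^ 2 * (4 * lam ^ 2 / π + 1 - lam ^ 2)) ^ 2
      - (4 * lam * M / (√(2 * π) * (1 - lam ^ 2) ^ 2) * √(2 * lam ^ 2 / π + 1 - lam ^ 2)) ^ 2
      = (M / (1 - lam ^ 2)) ^ 2 := by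
  have hA : 1 - lam ^ 2 ≠ 0 := by linarith
  have h2π : √(2 * π) ^ 2 = 2 * π := sq_sqrt (by positivity)
  have hs : √(2 * lam ^ 2 / π + 1 - lam ^ 2) ^ 2 = 2 * lam ^ 2 / π + 1 - lam ^ 2 :=
    sq_sqrt (by have : 0 ≤ 2 * lam ^ 2 / π := by positivity
                linarith)
  simp only [mul_pow, div_pow, h2π, hs]
  field_simp
  ring

lemma msd_ratio_limit_eq (N K lam q : ℝ) (hN : N ≠ 0) (hlam : lam ^ 2 < 1) (hq : q ≠ 0) :
    (N * q / (1 - lam ^ 2) + q / (2 * lam ^ 2 / (π * (1 - lam ^ 2)) + 1) / 2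
        * ((N - K) / (1 - lam ^ 2) - (N - K) / (1 - lam ^ 2) ^ 2 * (4 * lam ^ 2 / π + 1 - lam ^ 2)))
      / (N * q / (1 - lam ^ 2))
      = (π * (1 - lam ^ 2) + 2 * (K / N) * lam ^ 2) / (π * (1 - lam ^ 2) + 2 * lam ^ 2) := by
  have hA : 0 < 1 - lam ^ 2 := by linarith
  have hD : π * (1 - lam ^ 2) + 2 * lam ^ 2 ≠ 0 := by positivity
  field_simp
  ring

theorem stmt_13_general (N K : ℕ) (hKN : K < N) (lam G q : ℝ)
    (hlam0 : 0 < lam) (hlam1 : lam < 1) (hq : 0 < q) :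
    let β₁ : ℝ → ℝ := fun β => G / (β ^ 2 * (1 - lam) ^ 2)
        + (((N : ℝ) - K) / (1 - lam ^ 2) ^ 2) * (4 * lam ^ 2 / Real.pi + 1 - lam ^ 2)
    let β₂ : ℝ := (4 * lam * ((N : ℝ) - K) / (Real.sqrt (2 * Real.pi) * (1 - lam ^ 2) ^ 2))
        * Real.sqrt (2 * lam ^ 2 / Real.pi + 1 - lam ^ 2)
    let β₃ : ℝ := q / (2 * lam ^ 2 / (Real.pi * (1 - lam ^ 2)) + 1)
    let Dmin : ℝ → ℝ := fun β => (N : ℝ) * q / (1 - lam ^ 2)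
        + (β₃ / 2) * (Real.sqrt (β₁ β ^ 2 - β₂ ^ 2) - β₁ β)
    let Drls : ℝ := (N : ℝ) * q / (1 - lam ^ 2)
    Tendsto (fun β : ℝ => Dmin β / Drls) atTop
      (nhds ((Real.pi * (1 - lam ^ 2) + 2 * ((K : ℝ) / N) * lam ^ 2)
        / (Real.pi * (1 - lam ^ 2) + 2 * lam ^ 2))) := by
  intro β₁ β₂ β₃ Dmin Drls
  have hlam : lam ^ 2 < 1 := by nlinarith
  have hKN' : (K : ℝ) < N := by exact_mod_cast hKN
  set B := ((N : ℝ) - K) / (1 - lam ^ 2) ^ 2 * (4 * lam ^ 2 / π + 1 - lam ^ 2)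
  have hβ₁ : Tendsto β₁ atTop (𝓝 B) := by
    simpa using (tendsto_div_sq_mul_atTop_nhds_zero G ((1 - lam) ^ 2)).add_const B
  have hsqrt : √(B ^ 2 - β₂ ^ 2) = ((N : ℝ) - K) / (1 - lam ^ 2) := by
    rw [msd_beta_sq_sub_sq_eq _ _ hlam, sqrt_sq (div_nonneg (by linarith) (by linarith))]
  have hcont : Continuous fun x => (N : ℝ) * q / (1 - lam ^ 2) + β₃ / 2 * (√(x ^ 2 - β₂ ^ 2) - x) := by
    fun_prop
  have hval : ((N : ℝ) * q / (1 - lam ^ 2) + β₃ / 2 * (√(B ^ 2 - β₂ ^ 2) - B)) / Drls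
      = (π * (1 - lam ^ 2) + 2 * ((K : ℝ) / N) * lam ^ 2) / (π * (1 - lam ^ 2) + 2 * lam ^ 2) := by
    rw [hsqrt]
    exact msd_ratio_limit_eq _ _ _ _ (by linarith) hlam hq.ne'
  exact hval ▸ ((hcont.tendsto B).comp hβ₁).div_const Drls

/-- Corollary 3 (limit): the ratio of the minimum steady-state MSD of l0-RLS to
the steady-state MSD of conventional RLS tends, as `β → ∞`, to
`(π(1-λ²) + 2(K/N)λ²)/(π(1-λ²) + 2λ²)`. -/
theorem stmt_13 (N K : ℕ) (hN : 1 ≤ N) (hKN : K < N) (lam G q : ℝ)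
    (hlam0 : 0 < lam) (hlam1 : lam < 1) (hG : 0 < G) (hq : 0 < q) :
    let β₁ : ℝ → ℝ := fun β => G / (β ^ 2 * (1 - lam) ^ 2)
        + (((N : ℝ) - K) / (1 - lam ^ 2) ^ 2) * (4 * lam ^ 2 / Real.pi + 1 - lam ^ 2)
    let β₂ : ℝ := (4 * lam * ((N : ℝ) - K) / (Real.sqrt (2 * Real.pi) * (1 - lam ^ 2) ^ 2))
        * Real.sqrt (2 * lam ^ 2 / Real.pi + 1 - lam ^ 2)
    let β₃ : ℝ := q / (2 * lam ^ 2 / (Real.pi * (1 - lam ^ 2)) + 1)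
    let Dmin : ℝ → ℝ := fun β => (N : ℝ) * q / (1 - lam ^ 2)
        + (β₃ / 2) * (Real.sqrt (β₁ β ^ 2 - β₂ ^ 2) - β₁ β)
    let Drls : ℝ := (N : ℝ) * q / (1 - lam ^ 2)
    Tendsto (fun β : ℝ => Dmin β / Drls) atTop
      (nhds ((Real.pi * (1 - lam ^ 2) + 2 * ((K : ℝ) / N) * lam ^ 2)
        / (Real.pi * (1 - lam ^ 2) + 2 * lam ^ 2))) :=
  stmt_13_general N K hKN lam G q hlam0 hlam1 hq
end

section
/- Let N, K be natural numbers with K < N, let 0 < λ < 1, G > 0 and q > 0. For β > 0 define β₁(β) = G/(β²(1−λ)²) + ((N−K)/(1−λ²)²)·(4λ²/π + 1−λ²), β₂ = (4λ(N−K)/(√(2π)(1−λ²)²))·√(2λ²/π + 1−λ²), β₃ = q/(2λ²/(π(1−λ²)) + 1), and D_min(β) = Nq/(1−λ²) + (β₃/2)·(√(β₁(β)² − β₂²) − β₁(β)). Then β₁(β) ≥ β₂ for all β > 0, and D_min is a monotonically decreasing function of β on (0, ∞). -/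
/-! With `a = 2λ²/π` and `s = 1 - λ²`, the ratio of `β₂` to the `β`-free part of `β₁` is
`2 √a √(a + s) / (2a + s) ≤ 1` by AM-GM, so `β₂ ≤ β₁(β)`. For the monotonicity,
`x ↦ √(x² - d²) - x` is increasing on `[|d|, ∞)` while `β₁` decreases in `β`. -/

open Real

theorem two_mul_sqrt_mul_sqrt_le_add {x y : ℝ} (hx : 0 ≤ x) (hy : 0 ≤ y) :
    2 * √x * √y ≤ x + y := by
  simpa only [sq_sqrt hx, sq_sqrt hy] using two_mul_le_add_sq √x √y

theorem monotoneOn_sqrt_sq_sub_sq_sub_self (d : ℝ) :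
    MonotoneOn (fun x => √(x ^ 2 - d ^ 2) - x) (Set.Ici |d|) := by
  intro x (hx : |d| ≤ x) y (hy : |d| ≤ y) hxy
  have hdx : d ^ 2 ≤ x ^ 2 := sq_le_sq' (abs_le.1 hx).1 (abs_le.1 hx).2
  have hx0 : 0 ≤ x := (abs_nonneg d).trans hx
  set u := √(x ^ 2 - d ^ 2)
  have hu : u ^ 2 = x ^ 2 - d ^ 2 := sq_sqrt (sub_nonneg.2 hdx)
  have hux : u ≤ x := (sqrt_le_left hx0).2 (by linarith [sq_nonneg d])
  suffices u + (y - x) ≤ √(y ^ 2 - d ^ 2) by simp only; linarith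
  rw [le_sqrt (by linarith [sqrt_nonneg (x ^ 2 - d ^ 2)]) (by nlinarith)]
  nlinarith [mul_le_mul_of_nonneg_right hux (sub_nonneg.2 hxy)]

theorem four_mul_div_sqrt_two_pi_mul_sqrt_le {lam s : ℝ} (hlam : 0 ≤ lam) (hs : 0 ≤ s) :
    4 * lam / √(2 * π) * √(2 * lam ^ 2 / π + s) ≤ 4 * lam ^ 2 / π + s := by
  have hsq : 4 * lam / √(2 * π) = 2 * √(2 * lam ^ 2 / π) := by
    rw [show 2 * lam ^ 2 / π = (2 * lam) ^ 2 * (2 * π) / (2 * π) ^ 2 by field_simp,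
      sqrt_div' _ (sq_nonneg _), sqrt_sq (by positivity), sqrt_mul (sq_nonneg _),
      sqrt_sq (by positivity)]
    field_simp
    rw [sq_sqrt (by positivity)]
    ring
  have h2 : 0 ≤ 2 * lam ^ 2 / π := by positivity
  calc 4 * lam / √(2 * π) * √(2 * lam ^ 2 / π + s)
      = 2 * √(2 * lam ^ 2 / π) * √(2 * lam ^ 2 / π + s) := by rw [hsq]
    _ ≤ 2 * lam ^ 2 / π + (2 * lam ^ 2 / π + s) := two_mul_sqrt_mul_sqrt_le_add h2 (by positivity)
    _ = 4 * lam ^ 2 / π + s := by ring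

/-- Corollary 3 (monotonicity): `β₁(β) ≥ β₂` for all `β > 0`, and the minimum
steady-state MSD `Dmin(β)` of l0-RLS is a monotonically decreasing function of
the attraction parameter `β` on `(0, ∞)`. -/
theorem stmt_14 (N K : ℕ) (hKN : K < N) (lam G q : ℝ)
    (hlam0 : 0 < lam) (hlam1 : lam < 1) (hG : 0 < G) (hq : 0 < q) :
    let β₁ : ℝ → ℝ := fun β => G / (β ^ 2 * (1 - lam) ^ 2)
        + (((N : ℝ) - K) / (1 - lam ^ 2) ^ 2) * (4 * lam ^ 2 / Real.pi + 1 - lam ^ 2)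
    let β₂ : ℝ := (4 * lam * ((N : ℝ) - K) / (Real.sqrt (2 * Real.pi) * (1 - lam ^ 2) ^ 2))
        * Real.sqrt (2 * lam ^ 2 / Real.pi + 1 - lam ^ 2)
    let β₃ : ℝ := q / (2 * lam ^ 2 / (Real.pi * (1 - lam ^ 2)) + 1)
    let Dmin : ℝ → ℝ := fun β => (N : ℝ) * q / (1 - lam ^ 2)
        + (β₃ / 2) * (Real.sqrt (β₁ β ^ 2 - β₂ ^ 2) - β₁ β)
    (∀ β : ℝ, 0 < β → β₂ ≤ β₁ β) ∧ AntitoneOn Dmin (Set.Ioi 0) := by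
  intro β₁ β₂ β₃ Dmin
  have hs : 0 ≤ 1 - lam ^ 2 := by nlinarith
  have hM : 0 ≤ (N : ℝ) - K := sub_nonneg.2 (by exact_mod_cast hKN.le)
  have hβ₂ : 0 ≤ β₂ := by positivity
  have hβ₂_le : β₂ ≤ ((N : ℝ) - K) / (1 - lam ^ 2) ^ 2 * (4 * lam ^ 2 / π + 1 - lam ^ 2) := by
    have key := four_mul_div_sqrt_two_pi_mul_sqrt_le hlam0.le hs
    simp only [add_sub_assoc]
    calc β₂ = ((N : ℝ) - K) / (1 - lam ^ 2) ^ 2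
          * (4 * lam / √(2 * π) * √(2 * lam ^ 2 / π + (1 - lam ^ 2))) := by
            simp only [β₂, add_sub_assoc]; field_simp
      _ ≤ _ := by gcongr
  have hβ₁_ge : ∀ β, β₂ ≤ β₁ β := fun β =>
    hβ₂_le.trans (le_add_of_nonneg_left (by positivity))
  have hβ₁_anti : AntitoneOn β₁ (Set.Ioi 0) := by
    intro a (ha : 0 < a) b _ hab
    have : 0 < 1 - lam := sub_pos.2 hlam1
    simp only [β₁]
    gcongr
  refine ⟨fun β _ => hβ₁_ge β, fun a ha b hb hab => ?_⟩
  have hβ₁_mem : ∀ β, β₁ β ∈ Set.Ici |β₂| := fun β => by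
    rw [Set.mem_Ici, abs_of_nonneg hβ₂]; exact hβ₁_ge β
  have hf := monotoneOn_sqrt_sq_sub_sq_sub_self β₂ (hβ₁_mem b) (hβ₁_mem a) (hβ₁_anti ha hb hab)
  have hβ₃ : 0 ≤ β₃ :=
    div_nonneg hq.le (add_nonneg (div_nonneg (by positivity) (mul_nonneg pi_pos.le hs)) zero_le_one)
  simp only [Dmin]
  gcongr
end

section
/- Let f₂ > f₃ > 0, f₄ > 0 and β₃ > 0. Define, for f₁ ≥ 0, β₁(f₁) = f₁(f₂² + f₃²) + f₄ and β₂(f₁) = 2f₁f₂f₃. Then β₁(f₁)² − β₂(f₁)² = f₁²(f₂² − f₃²)² + 2f₁f₄(f₂² + f₃²) + f₄² ≥ 0, and the function f₁ ↦ (β₃/2)·(√(β₁(f₁)² − β₂(f₁)²) − β₁(f₁)) is monotonically decreasing on [0, ∞). -/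
/-!
With `a = x s + c` and `b = x p`, the slope of `√(a² - b²) - a` is `(s a - p b) / √(a² - b²) - s`,
which is nonpositive because `s²(a² - b²) - (s a - p b)² = p² x ((s² - p²) x + 2 s c) ≥ 0` when
`|p| ≤ s` and `c, x ≥ 0`. For the theorem, `s = f₂² + f₃²` and `p = 2 f₂ f₃`, and `|p| ≤ s` holds
by AM-GM.
-/

namespace HyperbolicGap

variable {s p c x : ℝ}

lemma sq_sub_sq_pos (hps : |p| ≤ s) (hc : 0 < c) (hx : 0 ≤ x) :
    0 < (x * s + c) ^ 2 - (x * p) ^ 2 := by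
  have hxs : x * |p| ≤ x * s := mul_le_mul_of_nonneg_left hps hx
  have hlt : |x * p| < |x * s + c| := by
    rw [abs_mul, abs_of_nonneg hx, abs_of_pos (a := x * s + c) (by nlinarith [abs_nonneg p])]
    linarith
  exact sub_pos.mpr (sq_lt_sq.mpr hlt)

lemma hasDerivAt (hQ : (x * s + c) ^ 2 - (x * p) ^ 2 ≠ 0) :
    HasDerivAt (fun x => √((x * s + c) ^ 2 - (x * p) ^ 2) - (x * s + c))
      ((s * (x * s + c) - p * (x * p)) / √((x * s + c) ^ 2 - (x * p) ^ 2) - s) x := by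
  have ha : HasDerivAt (fun x => x * s + c) s x := by
    simpa using ((hasDerivAt_id x).mul_const s).add_const c
  have hb : HasDerivAt (fun x => x * p) p x := by
    simpa using (hasDerivAt_id x).mul_const p
  refine ((((ha.fun_pow 2).fun_sub (hb.fun_pow 2)).sqrt hQ).fun_sub ha).congr_deriv ?_
  field_simp
  ring

lemma slope_nonpos (hps : |p| ≤ s) (hc : 0 < c) (hx : 0 ≤ x) :
    (s * (x * s + c) - p * (x * p)) / √((x * s + c) ^ 2 - (x * p) ^ 2) - s ≤ 0 := by
  have hQ := sq_sub_sq_pos hps hc hx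
  have hs : 0 ≤ s := (abs_nonneg p).trans hps
  have hgap : (s * (x * s + c) - p * (x * p)) ^ 2 ≤ s ^ 2 * ((x * s + c) ^ 2 - (x * p) ^ 2) := by
    have hp2 : p ^ 2 ≤ s ^ 2 := sq_le_sq' (neg_le_of_abs_le hps) (le_of_abs_le hps)
    have hfactor : 0 ≤ (s ^ 2 - p ^ 2) * x + 2 * s * c := by nlinarith [mul_nonneg hs hc.le]
    have hcross : 0 ≤ p ^ 2 * x * ((s ^ 2 - p ^ 2) * x + 2 * s * c) := by positivity
    nlinarith
  have hnum : s * (x * s + c) - p * (x * p) ≤ s * √((x * s + c) ^ 2 - (x * p) ^ 2) :=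
    calc s * (x * s + c) - p * (x * p) ≤ |s * (x * s + c) - p * (x * p)| := le_abs_self _
      _ ≤ √(s ^ 2 * ((x * s + c) ^ 2 - (x * p) ^ 2)) := Real.abs_le_sqrt hgap
      _ = s * √((x * s + c) ^ 2 - (x * p) ^ 2) := by
        rw [Real.sqrt_mul (sq_nonneg s), Real.sqrt_sq hs]
  rw [sub_nonpos, div_le_iff₀ (Real.sqrt_pos.mpr hQ)]
  linarith

lemma antitoneOn (hps : |p| ≤ s) (hc : 0 < c) :
    AntitoneOn (fun x => √((x * s + c) ^ 2 - (x * p) ^ 2) - (x * s + c)) (Set.Ici 0) := by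
  refine antitoneOn_of_hasDerivWithinAt_nonpos
    (f' := fun x => (s * (x * s + c) - p * (x * p)) / √((x * s + c) ^ 2 - (x * p) ^ 2) - s)
    (convex_Ici 0) (by fun_prop) (fun x hx => ?_) (fun x hx => ?_)
  all_goals rw [interior_Ici] at hx
  · exact (hasDerivAt (sq_sub_sq_pos hps hc (le_of_lt hx)).ne').hasDerivWithinAt
  · exact slope_nonpos hps hc (le_of_lt hx)

end HyperbolicGap

theorem stmt_16_general (f₂ f₃ f₄ β₃ : ℝ) (h4 : 0 < f₄)
    (hβ₃ : 0 < β₃) :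
    let β₁ : ℝ → ℝ := fun f₁ => f₁ * (f₂ ^ 2 + f₃ ^ 2) + f₄
    let β₂ : ℝ → ℝ := fun f₁ => 2 * f₁ * f₂ * f₃
    (∀ f₁ : ℝ, 0 ≤ f₁ →
        β₁ f₁ ^ 2 - β₂ f₁ ^ 2
          = f₁ ^ 2 * (f₂ ^ 2 - f₃ ^ 2) ^ 2 + 2 * f₁ * f₄ * (f₂ ^ 2 + f₃ ^ 2) + f₄ ^ 2 ∧
        0 ≤ β₁ f₁ ^ 2 - β₂ f₁ ^ 2) ∧
    AntitoneOn (fun f₁ : ℝ => (β₃ / 2) * (Real.sqrt (β₁ f₁ ^ 2 - β₂ f₁ ^ 2) - β₁ f₁))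
      (Set.Ici 0) := by
  intro β₁ β₂
  have hexpand (f₁ : ℝ) : β₁ f₁ ^ 2 - β₂ f₁ ^ 2
      = f₁ ^ 2 * (f₂ ^ 2 - f₃ ^ 2) ^ 2 + 2 * f₁ * f₄ * (f₂ ^ 2 + f₃ ^ 2) + f₄ ^ 2 := by
    simp only [β₁, β₂]; ring
  refine ⟨fun f₁ hf₁ => ⟨hexpand f₁, by rw [hexpand]; positivity⟩, ?_⟩
  have hps : |2 * f₂ * f₃| ≤ f₂ ^ 2 + f₃ ^ 2 :=
    abs_le.mpr ⟨by nlinarith [sq_nonneg (f₂ + f₃)], by nlinarith [sq_nonneg (f₂ - f₃)]⟩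
  intro x hx y hy hxy
  have hβ₂ (f₁ : ℝ) : β₂ f₁ = f₁ * (2 * f₂ * f₃) := by simp only [β₂]; ring
  simp only [hβ₂]
  exact mul_le_mul_of_nonneg_left (HyperbolicGap.antitoneOn hps h4 hx hy hxy) (half_pos hβ₃).le

/-- Corollary 4 (second part): with `β₁(f₁) = f₁(f₂² + f₃²) + f₄` and
`β₂(f₁) = 2f₁f₂f₃`, one has
`β₁² - β₂² = f₁²(f₂² - f₃²)² + 2f₁f₄(f₂² + f₃²) + f₄² ≥ 0`, and
`f₁ ↦ (β₃/2)(√(β₁(f₁)² - β₂(f₁)²) - β₁(f₁))` is monotonically decreasing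
on `[0, ∞)`. -/
theorem stmt_16 (f₂ f₃ f₄ β₃ : ℝ) (h23 : f₃ < f₂) (h3 : 0 < f₃) (h4 : 0 < f₄)
    (hβ₃ : 0 < β₃) :
    let β₁ : ℝ → ℝ := fun f₁ => f₁ * (f₂ ^ 2 + f₃ ^ 2) + f₄
    let β₂ : ℝ → ℝ := fun f₁ => 2 * f₁ * f₂ * f₃
    (∀ f₁ : ℝ, 0 ≤ f₁ →
        β₁ f₁ ^ 2 - β₂ f₁ ^ 2
          = f₁ ^ 2 * (f₂ ^ 2 - f₃ ^ 2) ^ 2 + 2 * f₁ * f₄ * (f₂ ^ 2 + f₃ ^ 2) + f₄ ^ 2 ∧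
        0 ≤ β₁ f₁ ^ 2 - β₂ f₁ ^ 2) ∧
    AntitoneOn (fun f₁ : ℝ => (β₃ / 2) * (Real.sqrt (β₁ f₁ ^ 2 - β₂ f₁ ^ 2) - β₁ f₁))
      (Set.Ici 0) :=
  stmt_16_general f₂ f₃ f₄ β₃ h4 hβ₃
end
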